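/- arXiv:0901.4221 — 4 statements merged into one kernel-verified Lean document; each statement's English description precedes it below -/
import Mathlib

section
/- For all s, s' ∈ {1,…,p}, the sets I_{s,s'} and J_{s,s'} are disjoint. -/
/-- The index set `I_{s,s'} = {s'-s+2i-1 : i = 1,…,s, s'-s+2i-1 ≤ 2p-s-s'}` (for `s ≤ s'`),
extended symmetrically to all pairs. -/
def Iset (p s s' : ℕ) : Finset ℕ :=
  ((Finset.Icc 1 (min s s')).image fun i => max s s' - min s s' + 2 * i - 1).filter
    fun t => t ≤ 2 * p - s - s'

/-- The index set `J_{s,s'} = {2p-2i-s'+s+1 : i = 1,…,s, 2p-2i-s'+s+1 ≤ p}` (for `s ≤ s'`),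
extended symmetrically to all pairs. -/
def Jset (p s s' : ℕ) : Finset ℕ :=
  ((Finset.Icc 1 (min s s')).image fun i => 2 * p + min s s' + 1 - 2 * i - max s s').filter
    fun t => t ≤ p


/-! Every element of `I_{s,s'}` is at most `2p - s - s'`, by the very filter defining it, while
every element of `J_{s,s'}` exceeds that threshold because `i ≤ min s s'`. The threshold is
compared as `a + s + s'` against `2p`, which is immune to truncated subtraction: elements of
`I_{s,s'}` are positive, so `I_{s,s'}` is empty when `2p < s + s'`. -/

theorem add_add_le_of_mem_Iset {p s s' a : ℕ} (ha : a ∈ Iset p s s') : a + s + s' ≤ 2 * p := by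
  simp only [Iset, Finset.mem_filter, Finset.mem_image, Finset.mem_Icc] at ha
  obtain ⟨⟨i, ⟨hi, -⟩, rfl⟩, hle⟩ := ha
  omega

theorem lt_add_add_of_mem_Jset {p s s' a : ℕ} (ha : a ∈ Jset p s s') : 2 * p < a + s + s' := by
  simp only [Jset, Finset.mem_filter, Finset.mem_image, Finset.mem_Icc] at ha
  obtain ⟨⟨i, ⟨-, hi⟩, rfl⟩, -⟩ := ha
  omega

theorem Iset_disjoint_Jset_general (p : ℕ) (s s' : ℕ) :
    Disjoint (Iset p s s') (Jset p s s') :=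
  Finset.disjoint_left.2 fun _ haI haJ =>
    (add_add_le_of_mem_Iset haI).not_gt (lt_add_add_of_mem_Jset haJ)

/-- For all `s, s' ∈ {1,…,p}`, the sets `I_{s,s'}` and `J_{s,s'}` are disjoint. -/
theorem Iset_disjoint_Jset (p : ℕ) (hp : 2 ≤ p) (s s' : ℕ)
    (hs : 1 ≤ s) (hsp : s ≤ p) (hs' : 1 ≤ s') (hs'p : s' ≤ p) :
    Disjoint (Iset p s s') (Jset p s s') :=
  Iset_disjoint_Jset_general p s s'
end

section
/- For s ∈ {1,…,p-1} and s' ∈ {1,…,p}, one has I_{p-s,s'} = {p - t : t ∈ I_{s,s'}}, and I_{p,s'} = ∅. -/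
theorem mem_Iset {p s s' t : ℕ} :
    t ∈ Iset p s s' ↔
      (t + s + s') % 2 = 1 ∧ max s s' < t + min s s' ∧ t < s + s' ∧ t + s + s' ≤ 2 * p := by
  simp only [Iset, Finset.mem_filter, Finset.mem_image, Finset.mem_Icc]
  constructor
  · rintro ⟨⟨i, ⟨hi₁, hi₂⟩, rfl⟩, ht⟩
    omega
  · rintro ⟨hodd, hlow, hhigh, hsum⟩
    exact ⟨⟨(t + min s s' + 1 - max s s') / 2, by omega, by omega⟩, by omega⟩

theorem Iset_eq_empty_of_le_max {p s s' : ℕ} (h : p ≤ max s s') : Iset p s s' = ∅ := by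
  ext t
  simp only [mem_Iset, Finset.notMem_empty, iff_false]
  omega

theorem Iset_sub_left_eq_image (p s s' : ℕ) :
    Iset p (p - s) s' = (Iset p s s').image (p - ·) := by
  ext u
  simp only [Finset.mem_image, mem_Iset]
  constructor
  · intro hu
    exact ⟨p - u, by omega, by omega⟩
  · rintro ⟨t, ht, rfl⟩
    omega

theorem Iset_reflect_general (p : ℕ) (s s' : ℕ) :
    Iset p (p - s) s' = (Iset p s s').image (fun t => p - t) ∧ Iset p p s' = ∅ :=
  ⟨Iset_sub_left_eq_image p s s', Iset_eq_empty_of_le_max (le_max_left _ _)⟩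

/-- For `s ∈ {1,…,p-1}` and `s' ∈ {1,…,p}`, `I_{p-s,s'} = {p - t : t ∈ I_{s,s'}}`,
and `I_{p,s'} = ∅`. -/
theorem Iset_reflect (p : ℕ) (hp : 2 ≤ p) (s s' : ℕ)
    (hs : 1 ≤ s) (hsp : s ≤ p - 1) (hs' : 1 ≤ s') (hs'p : s' ≤ p) :
    Iset p (p - s) s' = (Iset p s s').image (fun t => p - t) ∧ Iset p p s' = ∅ :=
  Iset_reflect_general p s s'
end

section
/- For s, s', t ∈ {1,…,p}, if t ∈ I_{s,s'} then s' ∈ I_{s,t}. -/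
/-
The elements of `I_{s,s'}` are the numbers `|s - s'| + 1, |s - s'| + 3, …, s + s' - 1` that are at
most `2p - s - s'`. So `t ∈ I_{s,s'}` says exactly that `s, s', t` satisfy the strict triangle
inequalities, have odd sum, and have sum at most `2p`; this condition is symmetric in all three
numbers.
-/

theorem mem_Iset_iff {p s s' t : ℕ} :
    t ∈ Iset p s s' ↔
      s < s' + t ∧ s' < s + t ∧ t < s + s' ∧ Odd (s + s' + t) ∧ s + s' + t ≤ 2 * p := by
  simp only [Iset, Finset.mem_filter, Finset.mem_image, Finset.mem_Icc, Nat.odd_iff]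
  constructor
  · rintro ⟨⟨i, hi, rfl⟩, hle⟩
    omega
  · rintro ⟨hs, hs', ht, hodd, hle⟩
    exact ⟨⟨(t + 1 + min s s' - max s s') / 2, by omega, by omega⟩, by omega⟩

theorem mem_Iset_symm_general (p : ℕ) (s s' t : ℕ) (h : t ∈ Iset p s s') : s' ∈ Iset p s t := by
  rw [mem_Iset_iff] at h ⊢
  obtain ⟨hs, hs', ht, hodd, hle⟩ := h
  exact ⟨by omega, by omega, by omega, by rwa [add_right_comm], by omega⟩

/-- For `s, s', t ∈ {1,…,p}`, if `t ∈ I_{s,s'}` then `s' ∈ I_{s,t}`. -/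
theorem mem_Iset_symm (p : ℕ) (hp : 2 ≤ p) (s s' t : ℕ)
    (hs : 1 ≤ s) (hsp : s ≤ p) (hs' : 1 ≤ s') (hs'p : s' ≤ p)
    (ht : 1 ≤ t) (htp : t ≤ p) (h : t ∈ Iset p s s') : s' ∈ Iset p s t :=
  mem_Iset_symm_general p s s' t h
end

section
/- Let V be an element of a left module Z over Ū_q(sl₂) such that Kv = ±q^{s-1}v, F^{p-1}v ≠ 0, and Ev = α F^{p-1}v for some s ∈ {1,…,p-1} and α ∈ k. Then the span of {F^n v : 0 ≤ n ≤ p-1} is a p-dimensional submodule of Z isomorphic to E_s^±(1;[1:α]). -/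
/-!
Since `K F = q⁻² F K`, each `F^n v` is a `K`-eigenvector of weight `ε q^(s-1-2n)`. Commuting `E`
past `F^n` with `[E, F] = (K - K⁻¹)/(q - q⁻¹)` gives `E F^n v = F^n E v + ε [n][s-n] F^(n-1) v`,
and `F^n E v = α F^(p-1+n) v` vanishes for `n ≥ 1` because `F^p = 0`. Hence every generator maps
the span of `v, F v, …, F^(p-1) v` into itself, and so does all of `Ū_q(sl₂)`. These vectors are
linearly independent because `F^(p-1) v ≠ 0 = F^p v`. Splitting them at `n = s`, the relation
`q^p = -1` turns the weights `ε q^(s-1-2n)` for `n ≥ s` into `-ε q^(p-s-1-2m)` and the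
coefficients `ε [n][s-n]` into `-ε [m][p-s-m]`, which is the action on `E_s^±(1;[1:α])`.
-/

open FreeAlgebra in
/-- The defining relations of the restricted quantum group `Ū_q(sl₂)` at a `2p`-th root of
unity, on the free algebra on four generators `E, F, K, K⁻¹` (indexed `0, 1, 2, 3`). -/
inductive URel (k : Type*) [Field k] (q : k) (p : ℕ) :
    FreeAlgebra k (Fin 4) → FreeAlgebra k (Fin 4) → Prop
  | KKinv : URel k q p (ι k 2 * ι k 3) 1
  | KinvK : URel k q p (ι k 3 * ι k 2) 1
  | KE : URel k q p (ι k 2 * ι k 0 * ι k 3) (q ^ 2 • ι k 0)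
  | KF : URel k q p (ι k 2 * ι k 1 * ι k 3) ((q ^ 2)⁻¹ • ι k 1)
  | EF : URel k q p (ι k 0 * ι k 1 - ι k 1 * ι k 0) ((q - q⁻¹)⁻¹ • (ι k 2 - ι k 3))
  | K2p : URel k q p (ι k 2 ^ (2 * p)) 1
  | Ep : URel k q p (ι k 0 ^ p) 0
  | Fp : URel k q p (ι k 1 ^ p) 0

/-- The restricted quantum group `Ū_q(sl₂)`, presented by generators and relations. -/
def Ubar (k : Type*) [Field k] (q : k) (p : ℕ) : Type _ := RingQuot (URel k q p)

noncomputable instance (k : Type*) [Field k] (q : k) (p : ℕ) : Ring (Ubar k q p) :=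
  inferInstanceAs (Ring (RingQuot (URel k q p)))

noncomputable instance (k : Type*) [Field k] (q : k) (p : ℕ) : Algebra k (Ubar k q p) :=
  inferInstanceAs (Algebra k (RingQuot (URel k q p)))

/-- The generator `E` of `Ū_q(sl₂)`. -/
noncomputable def UE (k : Type*) [Field k] (q : k) (p : ℕ) : Ubar k q p :=
  RingQuot.mkAlgHom k (URel k q p) (FreeAlgebra.ι k 0)

/-- The generator `F` of `Ū_q(sl₂)`. -/
noncomputable def UF (k : Type*) [Field k] (q : k) (p : ℕ) : Ubar k q p :=
  RingQuot.mkAlgHom k (URel k q p) (FreeAlgebra.ι k 1)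

/-- The generator `K` of `Ū_q(sl₂)`. -/
noncomputable def UK (k : Type*) [Field k] (q : k) (p : ℕ) : Ubar k q p :=
  RingQuot.mkAlgHom k (URel k q p) (FreeAlgebra.ι k 2)

/-- The generator `K⁻¹` of `Ū_q(sl₂)`. -/
noncomputable def UKinv (k : Type*) [Field k] (q : k) (p : ℕ) : Ubar k q p :=
  RingQuot.mkAlgHom k (URel k q p) (FreeAlgebra.ι k 3)

/-- The quantum integer `[n] = (q^n - q^{-n})/(q - q^{-1})`. -/
noncomputable def qint {k : Type*} [Field k] (q : k) (n : ℤ) : k :=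
  (q ^ n - q ^ (-n)) / (q - q⁻¹)

theorem linearIndependent_pow_apply {K V : Type*} [DivisionRing K] [AddCommGroup V] [Module K V]
    (f : Module.End K V) {n : ℕ} {w : V} (hn : (f ^ (n + 1)) w = 0) (hne : (f ^ n) w ≠ 0) :
    LinearIndependent K fun i : Fin (n + 1) => (f ^ (i : ℕ)) w := by
  induction n generalizing w with
  | zero => exact linearIndependent_unique_iff (ι := Fin 1) |>.mpr (by simpa using hne)
  | succ n ih =>
    have hfw : ∀ m : ℕ, (f ^ m) (f w) = (f ^ (m + 1)) w := fun m => by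
      rw [pow_succ, Module.End.mul_apply]
    have htail : Fin.tail (fun i : Fin (n + 2) => (f ^ (i : ℕ)) w) =
        fun i : Fin (n + 1) => (f ^ (i : ℕ)) (f w) := funext fun i => (hfw i).symm
    rw [linearIndependent_finSucc, htail]
    refine ⟨ih (by rwa [hfw]) (by rwa [hfw]), fun hw => hne ?_⟩
    have hker : Submodule.span K (Set.range fun i : Fin (n + 1) => (f ^ (i : ℕ)) (f w))
        ≤ LinearMap.ker (f ^ (n + 1)) := by
      rw [Submodule.span_le]
      rintro _ ⟨i, rfl⟩
      simp only [SetLike.mem_coe, LinearMap.mem_ker]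
      rw [hfw, ← Module.End.mul_apply, ← pow_add,
        show n + 1 + (i + 1) = i + (n + 1 + 1) by omega, pow_add, Module.End.mul_apply, hn,
        map_zero]
    simpa using hker hw

theorem IsPrimitiveRoot.pow_eq_neg_one {R : Type*} [CommRing R] [IsDomain R] {ζ : R} {n : ℕ}
    (h : IsPrimitiveRoot ζ (2 * n)) (hn : n ≠ 0) : ζ ^ n = -1 := by
  have h2 := h.pow_of_dvd hn (dvd_mul_left n 2)
  rw [Nat.mul_div_cancel _ (Nat.pos_of_ne_zero hn)] at h2
  exact h2.eq_neg_one_of_two_right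

theorem IsPrimitiveRoot.sub_inv_ne_zero {k : Type*} [Field k] {ζ : k} {n : ℕ}
    (h : IsPrimitiveRoot ζ n) (hn : 2 < n) : ζ - ζ⁻¹ ≠ 0 := by
  intro h0
  apply h.pow_ne_one_of_pos_of_lt two_ne_zero hn
  rw [sq]
  nth_rewrite 2 [sub_eq_zero.mp h0]
  exact mul_inv_cancel₀ (h.ne_zero (by omega))

theorem apply_mem_of_adjoin_eq_top {R A M : Type*} [CommSemiring R] [Semiring A] [Algebra R A]
    [AddCommMonoid M] [Module R M] {S : Set A} (hS : Algebra.adjoin R S = ⊤)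
    (ρ : A →ₐ[R] Module.End R M) {W : Submodule R M} (hW : ∀ a ∈ S, ∀ w ∈ W, ρ a w ∈ W)
    (u : A) : ∀ w ∈ W, ρ u w ∈ W := by
  have hu : u ∈ Algebra.adjoin R S := hS ▸ Algebra.mem_top
  induction hu using Algebra.adjoin_induction with
  | mem a ha => exact hW a ha
  | algebraMap r =>
    intro w hw
    rw [AlgHom.commutes, Module.algebraMap_end_apply]
    exact W.smul_mem r hw
  | add a b _ _ ha hb =>
    intro w hw
    rw [map_add, LinearMap.add_apply]
    exact W.add_mem (ha w hw) (hb w hw)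
  | mul a b _ _ ha hb =>
    intro w hw
    rw [map_mul, Module.End.mul_apply]
    exact ha _ (hb w hw)

theorem qint_neg {k : Type*} [Field k] (q : k) (n : ℤ) : qint q (-n) = -qint q n := by
  rw [qint, qint, neg_neg, ← neg_sub, neg_div]

theorem qint_sub_of_pow_eq_neg_one {k : Type*} [Field k] {q : k} (hq0 : q ≠ 0) {p : ℕ}
    (hq : q ^ p = -1) (n : ℤ) : qint q (p - n) = qint q n := by
  simp only [qint, sub_eq_add_neg, neg_add, neg_neg, zpow_add₀ hq0, zpow_neg, zpow_natCast, hq]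
  ring_nf

theorem qint_succ_mul_add {k : Type*} [Field k] {q : k} (hq : q - q⁻¹ ≠ 0) {c : k} (hc : c ≠ 0)
    (n : ℕ) :
    qint q (n + 1) * (q - q⁻¹)⁻¹ * (c * (q ^ n)⁻¹ - c⁻¹ * q ^ n) +
        (q - q⁻¹)⁻¹ * (c * (q ^ 2)⁻¹ ^ (n + 1) - (c * (q ^ 2)⁻¹ ^ (n + 1))⁻¹) =
      qint q ((n + 1 : ℕ) + 1) * (q - q⁻¹)⁻¹ * (c * (q ^ (n + 1))⁻¹ - c⁻¹ * q ^ (n + 1)) := by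
  have hq0 : q ≠ 0 := by rintro rfl; simp at hq
  simp only [qint, Nat.cast_add_one, zpow_add₀ hq0, zpow_neg, zpow_natCast, zpow_one, inv_pow]
  field_simp
  ring

section Relations

variable (k : Type*) [Field k] (q : k) (p : ℕ)

theorem UKinv_mul_UK : UKinv k q p * UK k q p = 1 := by
  have h := RingQuot.mkAlgHom_rel k (URel.KinvK (k := k) (q := q) (p := p))
  rwa [map_mul, map_one] at h

theorem UK_mul_UF : UK k q p * UF k q p = (q ^ 2)⁻¹ • (UF k q p * UK k q p) := by
  have hKFK : UK k q p * UF k q p * UKinv k q p = (q ^ 2)⁻¹ • UF k q p := by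
    have h := RingQuot.mkAlgHom_rel k (URel.KF (k := k) (q := q) (p := p))
    rwa [map_mul, map_mul, map_smul] at h
  rw [← smul_mul_assoc, ← hKFK, mul_assoc, UKinv_mul_UK, mul_one]

theorem UE_mul_UF : UE k q p * UF k q p =
    UF k q p * UE k q p + (q - q⁻¹)⁻¹ • (UK k q p - UKinv k q p) := by
  have h := RingQuot.mkAlgHom_rel k (URel.EF (k := k) (q := q) (p := p))
  rw [map_sub, map_mul, map_mul, map_smul, map_sub] at h
  exact sub_eq_iff_eq_add'.mp h

theorem UF_pow_eq_zero : UF k q p ^ p = 0 := by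
  have h := RingQuot.mkAlgHom_rel k (URel.Fp (k := k) (q := q) (p := p))
  rwa [map_pow, map_zero] at h

theorem Ubar.adjoin_generators :
    Algebra.adjoin k (Set.range ![UE k q p, UF k q p, UK k q p, UKinv k q p]) = ⊤ := by
  have h := congrArg (Subalgebra.map (RingQuot.mkAlgHom k (URel k q p)))
    (FreeAlgebra.adjoin_range_ι k (Fin 4))
  rw [AlgHom.map_adjoin, Algebra.map_top, ← Set.range_comp,
    (AlgHom.range_eq_top _).mpr (RingQuot.mkAlgHom_surjective k _)] at h
  have hgen : RingQuot.mkAlgHom k (URel k q p) ∘ FreeAlgebra.ι k =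
      ![UE k q p, UF k q p, UK k q p, UKinv k q p] := by
    funext i
    fin_cases i <;> rfl
  rwa [hgen] at h

end Relations

section Representation

variable {k : Type*} [Field k] {q : k} {p : ℕ} {Z : Type*} [AddCommGroup Z] [Module k Z]
  (ρ : Ubar k q p →ₐ[k] Module.End k Z) {c : k} {w : Z}

theorem UF_pow_apply_eq_zero {m : ℕ} (hm : p ≤ m) (u : Z) : (ρ (UF k q p) ^ m) u = 0 := by
  rw [← Nat.sub_add_cancel hm, pow_add, ← map_pow ρ (UF k q p) p, UF_pow_eq_zero, map_zero,
    mul_zero, LinearMap.zero_apply]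

theorem UKinv_apply_of_UK_apply (hc : c ≠ 0) (hw : ρ (UK k q p) w = c • w) :
    ρ (UKinv k q p) w = c⁻¹ • w := by
  have h : ρ (UKinv k q p) (ρ (UK k q p) w) = w := by
    rw [← Module.End.mul_apply, ← map_mul, UKinv_mul_UK, map_one, Module.End.one_apply]
  rw [hw, map_smul] at h
  rw [← inv_smul_smul₀ hc (ρ (UKinv k q p) w), h]

theorem UK_apply_UF_pow_apply (hw : ρ (UK k q p) w = c • w) (n : ℕ) :
    ρ (UK k q p) ((ρ (UF k q p) ^ n) w) = (c * (q ^ 2)⁻¹ ^ n) • (ρ (UF k q p) ^ n) w := by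
  induction n with
  | zero => simpa using hw
  | succ n ih =>
    rw [pow_succ', Module.End.mul_apply, ← Module.End.mul_apply, ← map_mul, UK_mul_UF, map_smul,
      map_mul, LinearMap.smul_apply, Module.End.mul_apply, ih, map_smul, smul_smul]
    congr 1
    ring

theorem UE_apply_UF_apply (hc : c ≠ 0) (hw : ρ (UK k q p) w = c • w) :
    ρ (UE k q p) (ρ (UF k q p) w) =
      ρ (UF k q p) (ρ (UE k q p) w) + ((q - q⁻¹)⁻¹ * (c - c⁻¹)) • w := by
  rw [← Module.End.mul_apply, ← map_mul, UE_mul_UF, map_add, map_smul, map_sub, map_mul,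
    LinearMap.add_apply, LinearMap.smul_apply, LinearMap.sub_apply, Module.End.mul_apply, hw,
    UKinv_apply_of_UK_apply ρ hc hw, ← sub_smul, smul_smul]

theorem UE_apply_UF_pow_succ_apply (hq : q - q⁻¹ ≠ 0) (hc : c ≠ 0)
    (hw : ρ (UK k q p) w = c • w) (n : ℕ) :
    ρ (UE k q p) ((ρ (UF k q p) ^ (n + 1)) w) =
      (ρ (UF k q p) ^ (n + 1)) (ρ (UE k q p) w) +
        (qint q (n + 1) * (q - q⁻¹)⁻¹ * (c * (q ^ n)⁻¹ - c⁻¹ * q ^ n)) •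
          (ρ (UF k q p) ^ n) w := by
  induction n with
  | zero =>
    have hq1 : qint q 1 = 1 := by simp [qint, hq]
    simpa [hq1] using UE_apply_UF_apply ρ hc hw
  | succ n ih =>
    have hcn : c * (q ^ 2)⁻¹ ^ (n + 1) ≠ 0 := by
      have hq0 : q ≠ 0 := by rintro rfl; simp at hq
      positivity
    have hF : ∀ (m : ℕ) (u : Z), ρ (UF k q p) ((ρ (UF k q p) ^ m) u) =
        (ρ (UF k q p) ^ (m + 1)) u := fun m u => by rw [pow_succ', Module.End.mul_apply]
    rw [← hF, UE_apply_UF_apply ρ hcn (UK_apply_UF_pow_apply ρ hw _), ih, map_add, map_smul,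
      hF, hF, add_assoc, ← add_smul, qint_succ_mul_add hq hc]


end Representation

section CyclicModule

variable {k : Type*} [Field k] {q : k} {p : ℕ} {Z : Type*} [AddCommGroup Z] [Module k Z]
  (ρ : Ubar k q p →ₐ[k] Module.End k Z) {ε α : k} {s : ℤ} {v : Z}

theorem UK_apply_UF_pow_apply_of_weight (hq0 : q ≠ 0)
    (hv : ρ (UK k q p) v = (ε * q ^ (s - 1)) • v) (n : ℕ) :
    ρ (UK k q p) ((ρ (UF k q p) ^ n) v) = (ε * q ^ (s - 1 - 2 * n)) • (ρ (UF k q p) ^ n) v := by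
  rw [UK_apply_UF_pow_apply ρ hv, sub_eq_add_neg (s - 1), zpow_add₀ hq0, zpow_neg, zpow_mul,
    zpow_natCast, zpow_ofNat, inv_pow, mul_assoc]

theorem UE_apply_UF_pow_apply_of_weight (hq : q - q⁻¹ ≠ 0) (hε : ε ^ 2 = 1)
    (hv : ρ (UK k q p) v = (ε * q ^ (s - 1)) • v)
    (hE : ρ (UE k q p) v = α • (ρ (UF k q p) ^ (p - 1)) v) {n : ℕ} (hn : n ≠ 0) :
    ρ (UE k q p) ((ρ (UF k q p) ^ n) v) =
      (ε * qint q n * qint q (s - n)) • (ρ (UF k q p) ^ (n - 1)) v := by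
  obtain ⟨n, rfl⟩ : ∃ m, n = m + 1 := ⟨n - 1, by omega⟩
  have hq0 : q ≠ 0 := by rintro rfl; simp at hq
  have hε0 : ε ≠ 0 := by rintro rfl; simp at hε
  rw [UE_apply_UF_pow_succ_apply ρ hq (by positivity) hv, hE, map_smul, ← Module.End.mul_apply,
    ← pow_add, UF_pow_apply_eq_zero ρ (by omega), smul_zero, zero_add, Nat.add_sub_cancel]
  have hεinv : ε⁻¹ = ε := inv_eq_of_mul_eq_one_right (by rw [← sq, hε])
  have hweight : ε * q ^ (s - 1) * (q ^ n)⁻¹ - (ε * q ^ (s - 1))⁻¹ * q ^ n =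
      ε * (q ^ (s - (n + 1)) - q ^ (-(s - (n + 1)))) := by
    rw [mul_inv, hεinv, show s - (n + 1) = s - 1 - n by ring, neg_sub,
      zpow_sub₀ hq0 (s - 1), zpow_sub₀ hq0 (n : ℤ), zpow_natCast]
    ring
  rw [hweight, Nat.cast_add_one]
  congr 1
  unfold qint
  ring

theorem linearIndependent_UF_pow_apply (hv : (ρ (UF k q p) ^ (p - 1)) v ≠ 0) :
    LinearIndependent k fun i : Fin p => (ρ (UF k q p) ^ (i : ℕ)) v := by
  cases p with
  | zero => exact linearIndependent_empty_type
  | succ n => exact linearIndependent_pow_apply _ (UF_pow_apply_eq_zero ρ le_rfl v) hv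

theorem apply_mem_span_UF_pow_apply (hq : q - q⁻¹ ≠ 0) (hε : ε ^ 2 = 1)
    (hv : ρ (UK k q p) v = (ε * q ^ (s - 1)) • v)
    (hE : ρ (UE k q p) v = α • (ρ (UF k q p) ^ (p - 1)) v) (u : Ubar k q p) :
    ∀ w ∈ Submodule.span k (Set.range fun i : Fin p => (ρ (UF k q p) ^ (i : ℕ)) v),
      ρ u w ∈ Submodule.span k (Set.range fun i : Fin p => (ρ (UF k q p) ^ (i : ℕ)) v) := by
  set W := Submodule.span k (Set.range fun i : Fin p => (ρ (UF k q p) ^ (i : ℕ)) v)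
  have hq0 : q ≠ 0 := by rintro rfl; simp at hq
  have hε0 : ε ≠ 0 := by rintro rfl; simp at hε
  have hmem (n : ℕ) : (ρ (UF k q p) ^ n) v ∈ W := by
    by_cases hn : n < p
    · exact Submodule.subset_span ⟨⟨n, hn⟩, rfl⟩
    · rw [UF_pow_apply_eq_zero ρ (not_lt.mp hn)]
      exact W.zero_mem
  have hstable (A : Module.End k Z) (hA : ∀ n : ℕ, A ((ρ (UF k q p) ^ n) v) ∈ W) :
      ∀ w ∈ W, A w ∈ W :=
    fun _ hw => (Submodule.span_le.mpr (Set.range_subset_iff.mpr (hA ·)) : W ≤ W.comap A) hw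
  refine apply_mem_of_adjoin_eq_top (Ubar.adjoin_generators k q p) ρ ?_ u
  rintro _ ⟨i, rfl⟩
  fin_cases i <;> simp only [Fin.zero_eta, Fin.mk_one, Fin.reduceFinMk, Matrix.cons_val] <;>
    apply hstable
  · rintro (_ | n)
    · rw [pow_zero, Module.End.one_apply, hE]
      exact W.smul_mem _ (hmem _)
    · rw [UE_apply_UF_pow_apply_of_weight ρ hq hε hv hE n.succ_ne_zero]
      exact W.smul_mem _ (hmem n)
  · intro n
    rw [← Module.End.mul_apply, ← pow_succ']
    exact hmem _
  · intro n
    rw [UK_apply_UF_pow_apply_of_weight ρ hq0 hv]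
    exact W.smul_mem _ (hmem n)
  · intro n
    rw [UKinv_apply_of_UK_apply ρ (by positivity) (UK_apply_UF_pow_apply_of_weight ρ hq0 hv n)]
    exact W.smul_mem _ (hmem n)

end CyclicModule

section SecondSegment

variable {k : Type*} [Field k] {q : k} {p : ℕ} {Z : Type*} [AddCommGroup Z] [Module k Z]
  (ρ : Ubar k q p →ₐ[k] Module.End k Z) {ε α : k} {s : ℕ} {v : Z}

theorem UK_apply_UF_pow_add_apply (hq0 : q ≠ 0) (hqp : q ^ p = -1)
    (hv : ρ (UK k q p) v = (ε * q ^ ((s : ℤ) - 1)) • v) (m : ℕ) :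
    ρ (UK k q p) ((ρ (UF k q p) ^ (s + m)) v) =
      (-ε * q ^ ((p : ℤ) - s - 1 - 2 * m)) • (ρ (UF k q p) ^ (s + m)) v := by
  rw [UK_apply_UF_pow_apply_of_weight ρ hq0 hv, show (p : ℤ) - s - 1 - 2 * m =
    p + ((s : ℤ) - 1 - 2 * (s + m : ℕ)) by push_cast; ring, zpow_add₀ hq0, zpow_natCast, hqp]
  ring_nf

theorem UE_apply_UF_pow_add_apply (hq : q - q⁻¹ ≠ 0) (hqp : q ^ p = -1) (hε : ε ^ 2 = 1)
    (hv : ρ (UK k q p) v = (ε * q ^ ((s : ℤ) - 1)) • v)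
    (hE : ρ (UE k q p) v = α • (ρ (UF k q p) ^ (p - 1)) v) (hs : s ≠ 0) (m : ℕ) :
    ρ (UE k q p) ((ρ (UF k q p) ^ (s + m)) v) =
      (-ε * qint q m * qint q ((p : ℤ) - s - m)) • (ρ (UF k q p) ^ (s + m - 1)) v := by
  have hq0 : q ≠ 0 := by rintro rfl; simp at hq
  rw [UE_apply_UF_pow_apply_of_weight ρ hq hε hv hE (by omega)]
  congr 1
  push_cast
  rw [show (s : ℤ) - (s + m) = -m by ring, qint_neg, ← qint_sub_of_pow_eq_neg_one hq0 hqp,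
    show (p : ℤ) - (s + m) = p - s - m by ring]
  ring

end SecondSegment

/-- If `v ∈ Z` satisfies `Kv = ±q^{s-1}v`, `F^{p-1}v ≠ 0` and `Ev = α F^{p-1}v`, then
`span{F^n v : 0 ≤ n ≤ p-1}` is a `p`-dimensional `Ū_q(sl₂)`-submodule of `Z`
isomorphic to `E_s^±(1;[1:α])`. -/
theorem Ubar_E_module_generated (k : Type*) [Field k]
    (p : ℕ) (q : k)
    (hq1 : q ^ (2 * p) = 1) (hq2 : ∀ m : ℕ, 0 < m → m < 2 * p → q ^ m ≠ 1)
    (Z : Type*) [AddCommGroup Z] [Module k Z]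
    (ρ : Ubar k q p →ₐ[k] Module.End k Z)
    (s : ℕ) (hs : 1 ≤ s) (hsp : s ≤ p - 1) (ε α : k) (hε : ε = 1 ∨ ε = -1)
    (v : Z)
    (hK : ρ (UK k q p) v = (ε * q ^ ((s : ℤ) - 1)) • v)
    (hF : (ρ (UF k q p) ^ (p - 1)) v ≠ 0)
    (hE : ρ (UE k q p) v = α • (ρ (UF k q p) ^ (p - 1)) v) :
    ∀ W : Submodule k Z,
      W = Submodule.span k (Set.range fun n : Fin p => (ρ (UF k q p) ^ (n : ℕ)) v) →
      (∀ u : Ubar k q p, ∀ w ∈ W, ρ u w ∈ W) ∧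
      Module.finrank k W = p ∧
      ∃ (b : Fin s → Z) (x : Fin (p - s) → Z),
        LinearIndependent k (Sum.elim b x) ∧
        Submodule.span k (Set.range (Sum.elim b x)) = W ∧
        (∀ n : Fin s,
          ρ (UK k q p) (b n) = (ε * q ^ ((s : ℤ) - 1 - 2 * (n : ℕ))) • b n) ∧
        (∀ m : Fin (p - s),
          ρ (UK k q p) (x m) = (-ε * q ^ ((p : ℤ) - s - 1 - 2 * (m : ℕ))) • x m) ∧
        (∀ n : Fin s,
          ρ (UE k q p) (b n) =
            if h : (n : ℕ) = 0 then α • x ⟨p - s - 1, by omega⟩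
            else (ε * qint q (n : ℕ) * qint q ((s : ℤ) - (n : ℕ))) •
              b ⟨(n : ℕ) - 1, Nat.lt_of_le_of_lt (Nat.sub_le _ _) n.isLt⟩) ∧
        (∀ m : Fin (p - s),
          ρ (UE k q p) (x m) =
            if h : (m : ℕ) = 0 then 0
            else (-ε * qint q (m : ℕ) * qint q ((p : ℤ) - s - (m : ℕ))) •
              x ⟨(m : ℕ) - 1, Nat.lt_of_le_of_lt (Nat.sub_le _ _) m.isLt⟩) ∧
        (∀ n : Fin s,
          ρ (UF k q p) (b n) =
            if h : (n : ℕ) = s - 1 then x ⟨0, by omega⟩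
            else b ⟨(n : ℕ) + 1, by have := n.isLt; omega⟩) ∧
        (∀ m : Fin (p - s),
          ρ (UF k q p) (x m) =
            if h : (m : ℕ) = p - s - 1 then 0
            else x ⟨(m : ℕ) + 1, by have := m.isLt; omega⟩) := by
  rintro W rfl
  have hζ := IsPrimitiveRoot.mk_of_lt q (by omega) hq1 hq2
  have hq0 : q ≠ 0 := hζ.ne_zero (by omega)
  have hqp : q ^ p = -1 := hζ.pow_eq_neg_one (by omega)
  have hq : q - q⁻¹ ≠ 0 := hζ.sub_inv_ne_zero (by omega)
  have hε2 : ε ^ 2 = 1 := by rcases hε with rfl | rfl <;> norm_num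
  have hli := linearIndependent_UF_pow_apply ρ hF
  have hExs := UE_apply_UF_pow_add_apply ρ hq hqp hε2 hK hE (by omega)
  have hFF (n : ℕ) : ρ (UF k q p) ((ρ (UF k q p) ^ n) v) = (ρ (UF k q p) ^ (n + 1)) v := by
    rw [pow_succ', Module.End.mul_apply]
  let e : Fin s ⊕ Fin (p - s) ≃ Fin p := finSumFinEquiv.trans (finCongr (by omega))
  have hbx : Sum.elim (fun n : Fin s => (ρ (UF k q p) ^ (n : ℕ)) v)
      (fun m : Fin (p - s) => (ρ (UF k q p) ^ (s + (m : ℕ))) v) =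
      (fun i : Fin p => (ρ (UF k q p) ^ (i : ℕ)) v) ∘ e := by
    ext (n | m) <;> rfl
  refine ⟨apply_mem_span_UF_pow_apply ρ hq hε2 hK hE, by simpa using finrank_span_eq_card hli,
    _, _, hbx ▸ hli.comp e e.injective,
    by rw [hbx, Set.range_comp, e.range_eq_univ, Set.image_univ],
    fun n => UK_apply_UF_pow_apply_of_weight ρ hq0 hK n,
    fun m => UK_apply_UF_pow_add_apply ρ hq0 hqp hK m, ?_, ?_, ?_, ?_⟩
  · rintro ⟨_ | n, hn⟩
    · simpa [show s + (p - s - 1) = p - 1 by omega] using hE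
    · exact (dif_neg n.succ_ne_zero).symm ▸
        UE_apply_UF_pow_apply_of_weight ρ hq hε2 hK hE n.succ_ne_zero
  · rintro ⟨_ | m, hm⟩
    · rw [dif_pos rfl, hExs]
      simp [qint]
    · exact (dif_neg m.succ_ne_zero).symm ▸ hExs (m + 1)
  · rintro ⟨n, hn⟩
    split_ifs with h
    · rw [hFF, h, Nat.sub_add_cancel hs]
      rfl
    · exact hFF n
  · rintro ⟨m, hm⟩
    split_ifs with h
    · rw [hFF]
      exact UF_pow_apply_eq_zero ρ (by omega) v
    · exact hFF (s + m)
end
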